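/- arXiv:2202.09349 — 4 statements merged into one kernel-verified Lean document; each statement's English description precedes it below -/
import Mathlib

section
/- Assume that n exists. Then for every integer l with 1 ≤ l ≤ n − 1 one has A_l ⊆ K°; that is, for every b ∈ ℤ^s with 0 ≤ b < α and |α − b| ≥ 2, the element β − lα + b lies in K and satisfies β − lα + b < β. -/
open Finset Pointwise

/-- Elements of `ℤ^s`, compared componentwise. -/
abbrev Vec (s : ℕ) := Fin s → ℤ

/-- A good local semigroup `S ⊆ ℕ^s` (encoded as a set of nonnegative vectors of `ℤ^s`):
`0 ∈ S`, `S + S ⊆ S`, closure under componentwise minima (G1), property (G2),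
existence of a conductor (G3), and locality (G4). -/
def GoodLocal {s : ℕ} (S : Set (Vec s)) : Prop :=
  (∀ a ∈ S, 0 ≤ a) ∧
  (0 : Vec s) ∈ S ∧
  (∀ a ∈ S, ∀ b ∈ S, a + b ∈ S) ∧
  (∀ a ∈ S, ∀ b ∈ S, a ⊓ b ∈ S) ∧
  (∀ a ∈ S, ∀ b ∈ S, ∀ i : Fin s, a i = b i →
    ∃ ε ∈ S, a i < ε i ∧
      ∀ j : Fin s, j ≠ i → min (a j) (b j) ≤ ε j ∧ (a j ≠ b j → ε j = min (a j) (b j))) ∧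
  (∃ c : Vec s, 0 ≤ c ∧ ∀ x : Vec s, 0 ≤ x → c + x ∈ S) ∧
  (∀ a ∈ S, (∃ i, a i = 0) → a = 0)

/-- `Δ^S(a) = {b ∈ S : b_i = a_i for some i, and b_j > a_j for all j ≠ i}`. -/
def Delta {s : ℕ} (S : Set (Vec s)) (a : Vec s) : Set (Vec s) :=
  {b ∈ S | ∃ i : Fin s, b i = a i ∧ ∀ j : Fin s, j ≠ i → a j < b j}

/-- The canonical ideal `K = {a ∈ ℤ^s : Δ^S(γ - a) = ∅}` where `γ = β - (1,…,1)`. -/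
def Kideal {s : ℕ} (S : Set (Vec s)) (β : Vec s) : Set (Vec s) :=
  {a : Vec s | Delta S (β - 1 - a) = ∅}

/-- `K° = {a ∈ K : a < β}`. -/
def Kcirc {s : ℕ} (S : Set (Vec s)) (β : Vec s) : Set (Vec s) :=
  {a ∈ Kideal S β | a < β}

/-- `R_i = {a ∈ ℕ^s : (i-1)α < a < iα}`. -/
def Rset {s : ℕ} (α : Vec s) (i : ℤ) : Set (Vec s) :=
  {a : Vec s | 0 ≤ a ∧ (i - 1) • α < a ∧ a < i • α}

/-!
Suppose `c ∈ Δ^S(lα - b - 1)` with the equality in coordinate `i`. Then `d := min(c, lα) ∈ S`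
satisfies `lα - b ≤ d + e_i` and `d_i < lα_i`. Since `|α - b| ≥ 2`, `d` is no multiple `kα`
with `k < l`. Taking the largest `k` with `kα ≤ d` (so `k < l`), the element `min(d, (k+1)α)` of `S`
lies strictly between `kα` and `(k+1)α`, i.e. in `R_{k+1}` with `k + 1 ≤ l < n`,
contradicting the minimality of `n`.
-/

namespace GoodLocal

variable {s : ℕ} {S : Set (Vec s)}

theorem nonneg (hS : GoodLocal S) {a : Vec s} (ha : a ∈ S) : 0 ≤ a := hS.1 a ha

theorem zero_mem (hS : GoodLocal S) : (0 : Vec s) ∈ S := hS.2.1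

theorem add_mem (hS : GoodLocal S) {a b : Vec s} (ha : a ∈ S) (hb : b ∈ S) : a + b ∈ S :=
  hS.2.2.1 a ha b hb

theorem inf_mem (hS : GoodLocal S) {a b : Vec s} (ha : a ∈ S) (hb : b ∈ S) : a ⊓ b ∈ S :=
  hS.2.2.2.1 a ha b hb

theorem eq_zero_of_apply_eq_zero (hS : GoodLocal S) {a : Vec s} (ha : a ∈ S) {i : Fin s}
    (hi : a i = 0) : a = 0 :=
  hS.2.2.2.2.2.2 a ha ⟨i, hi⟩

theorem apply_pos (hS : GoodLocal S) {a : Vec s} (ha : a ∈ S) (ha0 : a ≠ 0) (t : Fin s) :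
    0 < a t :=
  (hS.nonneg ha t).lt_of_ne fun h => ha0 (hS.eq_zero_of_apply_eq_zero ha h.symm)

theorem zsmul_mem (hS : GoodLocal S) {a : Vec s} (ha : a ∈ S) {k : ℤ} (hk : 0 ≤ k) :
    k • a ∈ S := by
  obtain ⟨k, rfl⟩ := Int.eq_ofNat_of_zero_le hk
  rw [natCast_zsmul]
  clear hk
  induction k with
  | zero => simpa using hS.zero_mem
  | succ k ih => rw [succ_nsmul]; exact hS.add_mem ih ha

end GoodLocal

section

variable {s : ℕ}

theorem inf_succ_smul_mem_Rset {α d : Vec s} {k : ℤ} (hk : 0 ≤ k) (hα : ∀ t, 0 < α t)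
    (hkd : k • α < d) (hd : ¬ (k + 1) • α ≤ d) : d ⊓ (k + 1) • α ∈ Rset α (k + 1) := by
  have hα0 : 0 ≤ α := fun t => (hα t).le
  have hk_succ : k • α ≤ (k + 1) • α := smul_le_smul_of_nonneg_right (by omega) hα0
  have hk_lt : k • α < d ⊓ (k + 1) • α := by
    refine (le_inf hkd.le hk_succ).lt_of_ne fun h => ?_
    obtain ⟨t, ht⟩ := (Pi.lt_def.mp hkd).2
    have hkt := congrFun h t
    simp only [Pi.smul_apply, smul_eq_mul, Pi.inf_apply] at ht hkt
    have hα_succ : k * α t < (k + 1) * α t := by rw [add_mul, one_mul]; linarith [hα t]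
    exact (lt_min ht hα_succ).ne hkt
  refine ⟨(smul_nonneg hk hα0).trans hk_lt.le, by rwa [add_sub_cancel_right], ?_⟩
  exact inf_le_right.lt_of_ne fun h => hd (h ▸ inf_le_left)

theorem exists_Rset_inter_nonempty {S : Set (Vec s)} (hS : GoodLocal S) {α d : Vec s}
    (hα : α ∈ S) (hαpos : ∀ t, 0 < α t) (hd : d ∈ S) {l : ℤ} {i : Fin s}
    (hdi : d i < l * α i) (hd_ne : ∀ k, 0 ≤ k → k < l → d ≠ k • α) :
    ∃ k, 0 ≤ k ∧ k < l ∧ (Rset α (k + 1) ∩ S).Nonempty := by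
  have lt_of_smul_le : ∀ z : ℤ, z • α ≤ d → z < l := fun z hz =>
    lt_of_mul_lt_mul_right ((hz i).trans_lt hdi) (hαpos i).le
  obtain ⟨k, ⟨hk0, hkd⟩, hkmax⟩ := Int.exists_greatest_of_bdd (P := fun z => 0 ≤ z ∧ z • α ≤ d)
    ⟨l, fun z hz => (lt_of_smul_le z hz.2).le⟩ ⟨0, le_rfl, by simpa using hS.nonneg hd⟩
  have hkl := lt_of_smul_le k hkd
  have hk_lt : k • α < d := hkd.lt_of_ne (hd_ne k hk0 hkl).symm
  have hk_succ : ¬ (k + 1) • α ≤ d := fun h => by linarith [hkmax (k + 1) ⟨by omega, h⟩]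
  exact ⟨k, hk0, hkl, _, inf_succ_smul_mem_Rset hk0 hαpos hk_lt hk_succ,
    hS.inf_mem hd (hS.zsmul_mem hα (by omega))⟩

theorem sub_smul_add_lt {α b : Vec s} (β : Vec s) {l : ℤ} (hl : 1 ≤ l) (hα : 0 ≤ α)
    (hb : b < α) : β - l • α + b < β := by
  have hb' : b < l • α := hb.trans_le (le_smul_of_one_le_left hα hl)
  calc β - l • α + b < β - l • α + l • α := add_lt_add_right hb' _
    _ = β := sub_add_cancel β _

theorem sum_sub_le_one_of_smul_sub_le {α b : Vec s} {k l : ℤ} (hkl : k < l) (hα : 0 ≤ α)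
    (i : Fin s) (h : l • α - b ≤ k • α + Pi.single i 1) : ∑ t, (α t - b t) ≤ 1 := by
  have hle : ∀ t, α t - b t ≤ Pi.single (M := fun _ => ℤ) i 1 t := fun t => by
    have ht := h t
    simp only [Pi.sub_apply, Pi.add_apply, Pi.smul_apply, smul_eq_mul] at ht
    have : α t ≤ (l - k) * α t := le_mul_of_one_le_left (hα t) (by omega)
    linarith
  calc ∑ t, (α t - b t) ≤ ∑ t, Pi.single (M := fun _ => ℤ) i 1 t := sum_le_sum fun t _ => hle t
    _ = 1 := by simp [Finset.sum_pi_single']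

theorem smul_sub_le_inf_add_single {α b c : Vec s} {l : ℤ} {i : Fin s} (hb : 0 ≤ b)
    (hci : c i = (l • α - b - 1) i) (hcj : ∀ j, j ≠ i → (l • α - b - 1) j < c j) :
    l • α - b ≤ c ⊓ l • α + Pi.single i 1 := fun t => by
  have hbt : 0 ≤ b t := hb t
  simp only [Pi.sub_apply, Pi.smul_apply, smul_eq_mul, Pi.one_apply] at hci hcj
  simp only [Pi.sub_apply, Pi.add_apply, Pi.inf_apply, Pi.smul_apply, smul_eq_mul]
  rcases eq_or_ne t i with rfl | ht
  · simp only [Pi.single_eq_same]; omega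
  · have := hcj t ht
    simp only [Pi.single_eq_of_ne ht]; omega

end

theorem A_l_subset_Kcirc_general
    (s : ℕ) (S : Set (Vec s)) (hS : GoodLocal S) (α β : Vec s) (hα₁ : α ∈ S) (hα₂ : α ≠ 0)
    (n : ℤ) (hn₃ : ∀ n' : ℤ, 1 ≤ n' → (Rset α n' ∩ S).Nonempty → n ≤ n') :
    ∀ l : ℤ, 1 ≤ l → l ≤ n - 1 →
      ∀ b : Vec s, 0 ≤ b → b < α → 2 ≤ ∑ t, (α t - b t) →
        β - l • α + b ∈ Kideal S β ∧ β - l • α + b < β := by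
  intro l hl hln b hb0 hbα hsum
  have hαpos := hS.apply_pos hα₁ hα₂
  refine ⟨?_, sub_smul_add_lt β hl (hS.nonneg hα₁) hbα⟩
  have hγ : β - 1 - (β - l • α + b) = l • α - b - 1 := by abel
  change Delta S _ = ∅
  rw [hγ, Set.eq_empty_iff_forall_notMem]
  rintro c ⟨hc, i, hci, hcj⟩
  have hd := smul_sub_le_inf_add_single hb0 hci hcj
  have hdi : (c ⊓ l • α) i < l * α i := calc
    (c ⊓ l • α) i ≤ c i := (inf_le_left : c ⊓ l • α ≤ c) i
    _ < l * α i := by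
      rw [hci]
      simp only [Pi.sub_apply, Pi.smul_apply, smul_eq_mul, Pi.one_apply]
      linarith [show 0 ≤ b i from hb0 i]
  obtain ⟨k, hk0, hkl, hR⟩ := exists_Rset_inter_nonempty hS hα₁ hαpos
    (hS.inf_mem hc (hS.zsmul_mem hα₁ (by omega))) hdi fun k _ hkl hdk =>
      (sum_sub_le_one_of_smul_sub_le hkl (hS.nonneg hα₁) i (hdk ▸ hd)).not_gt (by omega)
  linarith [hn₃ (k + 1) (by omega) hR]

/-- For `1 ≤ l ≤ n - 1`, the set `A_l = {β - lα + b : 0 ≤ b < α, |α - b| ≥ 2}`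
is contained in `K°`. -/
theorem A_l_subset_Kcirc
    (s : ℕ) (hs : 1 ≤ s) (S : Set (Vec s)) (hS : GoodLocal S)
    (hSne : S ≠ {a : Vec s | 0 ≤ a}) (α β : Vec s)
    (hα₁ : α ∈ S) (hα₂ : α ≠ 0) (hα₃ : ∀ a ∈ S, a ≠ 0 → α ≤ a)
    (hβ₁ : 0 ≤ β) (hβ₂ : ∀ x : Vec s, 0 ≤ x → β + x ∈ S)
    (hβ₃ : ∀ c : Vec s, 0 ≤ c → (∀ x : Vec s, 0 ≤ x → c + x ∈ S) → β ≤ c)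
    (m : ℤ) (hm₁ : (m + 1) • α ≤ β) (hm₂ : ∀ m' : ℤ, (m' + 1) • α ≤ β → m' ≤ m)
    (n : ℤ) (hn₁ : 1 ≤ n) (hn₂ : (Rset α n ∩ S).Nonempty)
    (hn₃ : ∀ n' : ℤ, 1 ≤ n' → (Rset α n' ∩ S).Nonempty → n ≤ n') :
    ∀ l : ℤ, 1 ≤ l → l ≤ n - 1 →
      ∀ b : Vec s, 0 ≤ b → b < α → 2 ≤ ∑ t, (α t - b t) →
        β - l • α + b ∈ Kideal S β ∧ β - l • α + b < β :=
  A_l_subset_Kcirc_general s S hS α β hα₁ hα₂ n hn₃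
end

section
/- Assume that n exists and let d ∈ R_n ∩ S. Then for every integer k with 0 ≤ k ≤ m − n + 1, the element d + kα lies in K°; that is, d + kα ∈ K and d + kα < β. -/
open Finset Pointwise

/-- Key induction: from a witness `w ∈ S` with `w i = β i - 1` and `w j ≥ β j` off `i`,
any `a` with the same shape belongs to `S`. -/
lemma claim_mem (s : ℕ) (S : Set (Vec s)) (hS : GoodLocal S) (β : Vec s)
    (hβ₂ : ∀ x : Vec s, 0 ≤ x → β + x ∈ S) (i : Fin s) (a : Vec s)
    (hai : a i = β i - 1) (haj : ∀ j, j ≠ i → β j ≤ a j) :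
    ∀ N : ℕ, ∀ w, w ∈ S → w i = β i - 1 → (∀ j, j ≠ i → β j ≤ w j) →
      (∑ j, (a j + 1 - w j).toNat) ≤ N → a ∈ S := by
  obtain ⟨hpos, h0, hadd, hinf, hG2, -, -⟩ := hS
  intro N
  induction N with
  | zero =>
    intro w _ hwi _ hsum
    exfalso
    have : (a i + 1 - w i).toNat = 1 := by rw [hai, hwi]; simp
    have h1 : 1 ≤ ∑ j, (a j + 1 - w j).toNat := by
      calc 1 = (a i + 1 - w i).toNat := this.symm
        _ ≤ _ := Finset.single_le_sum (f := fun j => (a j + 1 - w j).toNat)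
            (fun _ _ => Nat.zero_le _) (Finset.mem_univ i)
    omega
  | succ N ih =>
    intro w hwS hwi hwj hsum
    by_cases hall : ∀ j, j ≠ i → a j < w j
    · -- a = w ⊓ (a + single i 1)
      have hmem : a + Pi.single i 1 ∈ S := by
        have hx : (0 : Vec s) ≤ a + Pi.single i 1 - β := by
          intro j
          by_cases hj : j = i
          · subst hj; simp [hai]
          · have := haj j hj
            simp [Pi.single_apply, hj]
            omega
        have := hβ₂ _ hx
        simpa using this
      have heq : a = w ⊓ (a + Pi.single i 1) := by
        funext j
        by_cases hj : j = i
        · subst hj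
          simp [Pi.inf_apply, hwi, hai]
        · have h1 := hall j hj
          simp [Pi.inf_apply, Pi.single_apply, hj]
          omega
      rw [heq]
      exact hinf w hwS _ hmem
    · push_neg at hall
      obtain ⟨j0, hj0i, hj0⟩ := hall
      -- build v ∈ S with v j0 = w j0 and v l > w l elsewhere
      set v : Vec s := fun l => if l = j0 then w j0 else max (β l) (w l) + 1 with hv
      have hvS : v ∈ S := by
        have hx : (0 : Vec s) ≤ v - β := by
          intro l
          by_cases hl : l = j0
          · have h1 := hwj j0 hj0i
            simp [hv, hl]
            omega
          · simp [hv, hl]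
            omega
        have := hβ₂ _ hx
        simpa using this
      have hvj0 : w j0 = v j0 := by simp [hv]
      obtain ⟨ε, hεS, hεj0, hεl⟩ := hG2 w hwS v hvS j0 hvj0
      have hεeq : ∀ l, l ≠ j0 → ε l = w l := by
        intro l hl
        have hvl : w l < v l := by simp [hv, hl]
        have := (hεl l hl).2 (by omega)
        rw [this]
        omega
      have hεi : ε i = β i - 1 := by rw [hεeq i (by exact fun h => hj0i h.symm)]; exact hwi
      have hεj : ∀ j, j ≠ i → β j ≤ ε j := by
        intro j hj
        by_cases hjj0 : j = j0
        · subst hjj0; have := hwj j hj; omega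
        · rw [hεeq j hjj0]; exact hwj j hj
      apply ih ε hεS hεi hεj
      have hlt : ∑ j, (a j + 1 - ε j).toNat < ∑ j, (a j + 1 - w j).toNat := by
        apply Finset.sum_lt_sum
        · intro l _
          by_cases hl : l = j0
          · subst hl; omega
          · rw [hεeq l hl]
        · exact ⟨j0, Finset.mem_univ _, by omega⟩
      omega

lemma delta_gamma_empty (s : ℕ) (S : Set (Vec s)) (hS : GoodLocal S) (β : Vec s)
    (hβ₁ : 0 ≤ β)
    (hβ₂ : ∀ x : Vec s, 0 ≤ x → β + x ∈ S)
    (hβ₃ : ∀ c : Vec s, 0 ≤ c → (∀ x : Vec s, 0 ≤ x → c + x ∈ S) → β ≤ c) :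
    Delta S (β - 1) = ∅ := by
  by_contra h
  rw [Set.eq_empty_iff_forall_notMem] at h
  push_neg at h
  obtain ⟨c, hc⟩ := h
  obtain ⟨hcS, i, hci, hcj⟩ := hc
  have hci' : c i = β i - 1 := by simpa using hci
  have hcj' : ∀ j, j ≠ i → β j ≤ c j := by
    intro j hj
    have := hcj j hj
    simp at this
    omega
  have hc0 : 0 ≤ c := hS.1 c hcS
  have hci0 : 0 ≤ c i := hc0 i
  have hcond : ∀ x : Vec s, 0 ≤ x → (β - Pi.single i 1) + x ∈ S := by
    intro x hx
    by_cases hxi : 1 ≤ x i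
    · have h0 : (0 : Vec s) ≤ β - Pi.single i 1 + x - β := by
        intro j
        by_cases hj : j = i
        · have h1 : 0 ≤ x i := by simpa using hx i
          simp [Pi.single_apply, hj]
          omega
        · have h1 : 0 ≤ x j := by simpa using hx j
          simp [Pi.single_apply, hj]
          omega
      have := hβ₂ _ h0
      simpa using this
    · have hxi0 : x i = 0 := by
        have h1 : 0 ≤ x i := by simpa using hx i
        omega
      refine claim_mem s S hS β hβ₂ i (β - Pi.single i 1 + x) ?_ ?_
        (∑ j, (((β - Pi.single i 1 + x : Vec s)) j + 1 - c j).toNat) c hcS hci' hcj' le_rfl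
      · simp [hxi0]
      · intro j hj
        have h1 : 0 ≤ x j := by simpa using hx j
        simp [Pi.single_apply, hj]
        omega
  have h0' : (0 : Vec s) ≤ β - Pi.single i 1 := by
    intro j
    by_cases hj : j = i
    · subst hj; simp; omega
    · have h1 : 0 ≤ β j := by simpa using hβ₁ j
      simp [Pi.single_apply, hj]
      omega
  have := hβ₃ _ h0' hcond i
  simp at this

lemma zsmul_mem_good (s : ℕ) (S : Set (Vec s)) (hS : GoodLocal S) (α : Vec s) (hα : α ∈ S) :
    ∀ k : ℤ, 0 ≤ k → k • α ∈ S := by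
  have hnat : ∀ N : ℕ, (N : ℤ) • α ∈ S := by
    intro N
    induction N with
    | zero => simpa using hS.2.1
    | succ N ih =>
      have := hS.2.2.1 _ ih _ hα
      have heq : ((N + 1 : ℕ) : ℤ) • α = (N : ℤ) • α + α := by
        push_cast
        rw [add_smul, one_smul]
      rw [heq]
      exact this
  intro k hk
  obtain ⟨N, rfl⟩ := Int.eq_ofNat_of_zero_le hk
  exact hnat N


/-- For `d ∈ R_n ∩ S` and `0 ≤ k ≤ m - n + 1`, the element `d + kα` lies in `K°`. -/
theorem d_plus_k_alpha_mem_Kcirc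
    (s : ℕ) (hs : 1 ≤ s) (S : Set (Vec s)) (hS : GoodLocal S)
    (hSne : S ≠ {a : Vec s | 0 ≤ a}) (α β : Vec s)
    (hα₁ : α ∈ S) (hα₂ : α ≠ 0) (hα₃ : ∀ a ∈ S, a ≠ 0 → α ≤ a)
    (hβ₁ : 0 ≤ β) (hβ₂ : ∀ x : Vec s, 0 ≤ x → β + x ∈ S)
    (hβ₃ : ∀ c : Vec s, 0 ≤ c → (∀ x : Vec s, 0 ≤ x → c + x ∈ S) → β ≤ c)
    (m : ℤ) (hm₁ : (m + 1) • α ≤ β) (hm₂ : ∀ m' : ℤ, (m' + 1) • α ≤ β → m' ≤ m)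
    (n : ℤ) (hn₁ : 1 ≤ n) (hn₂ : (Rset α n ∩ S).Nonempty)
    (hn₃ : ∀ n' : ℤ, 1 ≤ n' → (Rset α n' ∩ S).Nonempty → n ≤ n')
    (d : Vec s) (hd : d ∈ Rset α n ∩ S) :
    ∀ k : ℤ, 0 ≤ k → k ≤ m - n + 1 →
      d + k • α ∈ Kideal S β ∧ d + k • α < β := by
  obtain ⟨⟨hd0, hdl, hdu⟩, hdS⟩ := hd
  have hα0 : 0 ≤ α := hS.1 α hα₁
  have hΔ : Delta S (β - 1) = ∅ := delta_gamma_empty s S hS β hβ₁ hβ₂ hβ₃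
  intro k hk0 hk1
  have hkα : k • α ∈ S := zsmul_mem_good s S hS α hα₁ k hk0
  have hsum : d + k • α ∈ S := hS.2.2.1 d hdS _ hkα
  constructor
  · -- membership in Kideal
    rw [Kideal, Set.mem_setOf_eq, Set.eq_empty_iff_forall_notMem]
    intro b hb
    obtain ⟨hbS, i, hbi, hbj⟩ := hb
    have hcmem : b + (d + k • α) ∈ Delta S (β - 1) := by
      refine ⟨hS.2.2.1 b hbS _ hsum, i, ?_, ?_⟩
      · have h1 : b i = β i - 1 - (d i + k * α i) := by simpa [smul_eq_mul] using hbi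
        simp [smul_eq_mul]
        omega
      · intro j hj
        have h1 : β j - 1 - (d j + k * α j) < b j := by simpa [smul_eq_mul] using hbj j hj
        simp [smul_eq_mul]
        omega
    rw [hΔ] at hcmem
    exact hcmem
  · -- d + k • α < β
    rw [Pi.lt_def] at hdu ⊢
    obtain ⟨hdu1, i0, hdu2⟩ := hdu
    have key : ∀ j : Fin s, d j + k * α j ≤ β j := by
      intro j
      have e0 : 0 ≤ α j := by simpa using hα0 j
      have e1 : d j ≤ n * α j := by simpa [smul_eq_mul] using hdu1 j
      have e2 : k * α j ≤ (m - n + 1) * α j := mul_le_mul_of_nonneg_right hk1 e0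
      have e3 : (m + 1) * α j ≤ β j := by simpa [smul_eq_mul] using hm₁ j
      nlinarith
    constructor
    · intro j
      have := key j
      simpa [smul_eq_mul] using this
    · refine ⟨i0, ?_⟩
      have e0 : 0 ≤ α i0 := by simpa using hα0 i0
      have e1 : d i0 < n * α i0 := by simpa [smul_eq_mul] using hdu2
      have e2 : k * α i0 ≤ (m - n + 1) * α i0 := mul_le_mul_of_nonneg_right hk1 e0
      have e3 : (m + 1) * α i0 ≤ β i0 := by simpa [smul_eq_mul] using hm₁ i0
      have : d i0 + k * α i0 < β i0 := by nlinarith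
      simpa [smul_eq_mul] using this
end

section
/- Assume that n exists and let d ∈ R_n ∩ S. Let l and k be integers with 1 ≤ l ≤ n − 1 and 0 ≤ k ≤ m − n + 1, and set i := n − l + k. Then there exist an index j ∈ {1, …, s} and an element b ∈ ℤ^s with 0 ≤ b < α and |α − b| ≥ 2 such that β + iα − e_j = (β − lα + b) + d + kα; in other words, β + iα − e_j ∈ A_l + d + kα. -/
open Finset Pointwise

/-- For `d ∈ R_n ∩ S`, `1 ≤ l ≤ n - 1`, `0 ≤ k ≤ m - n + 1` and `i = n - l + k`,
one has `β + iα - e_j ∈ A_l + d + kα` for some index `j`. -/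
theorem beta_plus_i_alpha_decomposition
    (s : ℕ) (hs : 1 ≤ s) (S : Set (Vec s)) (hS : GoodLocal S)
    (hSne : S ≠ {a : Vec s | 0 ≤ a}) (α β : Vec s)
    (hα₁ : α ∈ S) (hα₂ : α ≠ 0) (hα₃ : ∀ a ∈ S, a ≠ 0 → α ≤ a)
    (hβ₁ : 0 ≤ β) (hβ₂ : ∀ x : Vec s, 0 ≤ x → β + x ∈ S)
    (hβ₃ : ∀ c : Vec s, 0 ≤ c → (∀ x : Vec s, 0 ≤ x → c + x ∈ S) → β ≤ c)
    (m : ℤ) (hm₁ : (m + 1) • α ≤ β) (hm₂ : ∀ m' : ℤ, (m' + 1) • α ≤ β → m' ≤ m)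
    (n : ℤ) (hn₁ : 1 ≤ n) (hn₂ : (Rset α n ∩ S).Nonempty)
    (hn₃ : ∀ n' : ℤ, 1 ≤ n' → (Rset α n' ∩ S).Nonempty → n ≤ n')
    (d : Vec s) (hd : d ∈ Rset α n ∩ S) (l k : ℤ)
    (hl : 1 ≤ l) (hln : l ≤ n - 1) (hk : 0 ≤ k) (hkm : k ≤ m - n + 1) :
    ∃ (j : Fin s) (b : Vec s), 0 ≤ b ∧ b < α ∧ 2 ≤ ∑ t, (α t - b t) ∧
      β + (n - l + k) • α - Pi.single j 1 = (β - l • α + b) + d + k • α := by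
  obtain ⟨⟨hd0, hlo, hhi⟩, hdS⟩ := hd
  rw [Pi.lt_def] at hhi hlo
  obtain ⟨hle, j, hj⟩ := hhi
  obtain ⟨hle', i0, hi0⟩ := hlo
  simp only [Pi.smul_apply, smul_eq_mul] at hj hi0
  have hle2 : ∀ t, d t ≤ n * α t := fun t => by
    have := hle t; simpa using this
  have hle2' : ∀ t, (n - 1) * α t ≤ d t := fun t => by
    have := hle' t; simpa using this
  have hsingle : ∀ t, (Pi.single j (1 : ℤ) : Vec s) t = if t = j then 1 else 0 := by
    intro t; rw [Pi.single_apply]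
  refine ⟨j, n • α - d - Pi.single j 1, ?_, ?_, ?_, ?_⟩
  · intro t
    simp only [Pi.sub_apply, Pi.smul_apply, smul_eq_mul, Pi.zero_apply, hsingle]
    split_ifs with h
    · subst h; linarith [hj]
    · linarith [hle2 t]
  · rw [Pi.lt_def]
    constructor
    · intro t
      simp only [Pi.sub_apply, Pi.smul_apply, smul_eq_mul, hsingle]
      split_ifs with h
      · linarith [hle2' t]
      · linarith [hle2' t]
    · refine ⟨j, ?_⟩
      simp only [Pi.sub_apply, Pi.smul_apply, smul_eq_mul, hsingle, if_pos rfl, if_true,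
        eq_self_iff_true]
      linarith [hle2' j]
  · have hterm : ∀ t, α t - (n • α - d - Pi.single j 1 : Vec s) t
        = (d t - (n - 1) * α t) + (Pi.single j (1 : ℤ) : Vec s) t := by
      intro t
      simp only [Pi.sub_apply, Pi.smul_apply, smul_eq_mul]
      ring
    simp only [hterm]
    rw [Finset.sum_add_distrib, Finset.sum_pi_single']
    rw [if_pos (Finset.mem_univ j)]
    have hsum : 1 ≤ ∑ t, (d t - (n - 1) * α t) := by
      have hnn : ∀ t ∈ Finset.univ, (0 : ℤ) ≤ d t - (n - 1) * α t := by
        intro t _; linarith [hle2' t]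
      calc (1 : ℤ) ≤ d i0 - (n - 1) * α i0 := by linarith
        _ ≤ ∑ t, (d t - (n - 1) * α t) :=
          Finset.single_le_sum hnn (Finset.mem_univ i0)
    linarith
  · have h : (n - l + k) • α = n • α - l • α + k • α := by
      rw [add_smul, sub_smul]
    rw [h]
    abel
end

section
/- Assume m ≥ 1. Then for every integer j with 1 ≤ j ≤ m and every b ∈ ℤ^s with 0 ≤ b < α and |α − b| ≥ 2, the element β + (j−1)α + b belongs to K° + K°; equivalently, A_1 + jα ⊆ K° + K° for every 1 ≤ j ≤ m. -/
open Finset Pointwise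

lemma raise_lemma {s : ℕ} {S : Set (Vec s)} (hS : GoodLocal S) {β : Vec s}
    (hβ₂ : ∀ x : Vec s, 0 ≤ x → β + x ∈ S)
    {i j₀ : Fin s} (hj₀ : j₀ ≠ i) {z : Vec s} (hzS : z ∈ S)
    (hzi : z i = β i - 1) (hz : ∀ j, j ≠ i → β j ≤ z j) (k : ℕ) :
    ∃ y ∈ S, y i = β i - 1 ∧ (∀ j, j ≠ i → z j ≤ y j) ∧ z j₀ + k ≤ y j₀ := by
  induction k with
  | zero => exact ⟨z, hzS, hzi, fun j _ => le_refl _, by simp⟩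
  | succ k ih =>
    obtain ⟨y, hyS, hyi, hyge, hyj₀⟩ := ih
    have hb : y + (Pi.single i 1 : Vec s) ∈ S := by
      have heq : y + (Pi.single i 1 : Vec s) = β + (y + (Pi.single i 1 : Vec s) - β) := by ring
      rw [heq]
      apply hβ₂
      intro k'
      simp only [Pi.sub_apply, Pi.add_apply, Pi.zero_apply]
      by_cases hk : k' = i
      · subst hk; rw [Pi.single_eq_same]; linarith
      · rw [Pi.single_eq_of_ne hk]
        have h1 := hz k' hk; have h2 := hyge k' hk; linarith
    have hG2 := hS.2.2.2.2.1
    have heq : y j₀ = (y + (Pi.single i 1 : Vec s)) j₀ := by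
      simp [Pi.single_eq_of_ne hj₀]
    obtain ⟨ε, hεS, hεj₀, hεrest⟩ := hG2 y hyS _ hb j₀ heq
    have hεi : ε i = y i := by
      obtain ⟨_, h2⟩ := hεrest i (Ne.symm hj₀)
      have hne : y i ≠ (y + (Pi.single i 1 : Vec s)) i := by simp
      rw [h2 hne]
      simp
    refine ⟨ε, hεS, by rw [hεi, hyi], ?_, ?_⟩
    · intro j hj
      by_cases hjj₀ : j = j₀
      · subst hjj₀
        have := hyge j hj; linarith
      · obtain ⟨h1, _⟩ := hεrest j hjj₀
        have : min (y j) ((y + (Pi.single i 1 : Vec s)) j) = y j := by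
          by_cases hji : j = i
          · subst hji; simp
          · simp [Pi.single_eq_of_ne hji]
        rw [this] at h1
        exact le_trans (hyge j hj) h1
    · push_cast
      linarith

lemma reach_lemma {s : ℕ} {S : Set (Vec s)} (hS : GoodLocal S) {β : Vec s}
    (hβ₂ : ∀ x : Vec s, 0 ≤ x → β + x ∈ S)
    {i : Fin s} {z : Vec s} (hzS : z ∈ S) (hzi : z i = β i - 1)
    (hz : ∀ j, j ≠ i → β j ≤ z j) (w : Vec s) :
    ∃ y ∈ S, y i = β i - 1 ∧ ∀ j, j ≠ i → β j ≤ y j ∧ w j ≤ y j := by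
  suffices h : ∀ T : Finset (Fin s), ∃ y ∈ S, y i = β i - 1 ∧
      (∀ j, j ≠ i → β j ≤ y j) ∧ ∀ j ∈ T, j ≠ i → w j ≤ y j by
    obtain ⟨y, hyS, hyi, h1, h2⟩ := h Finset.univ
    exact ⟨y, hyS, hyi, fun j hj => ⟨h1 j hj, h2 j (Finset.mem_univ j) hj⟩⟩
  intro T
  induction T using Finset.induction with
  | empty => exact ⟨z, hzS, hzi, hz, by simp⟩
  | @insert j₀ T hj₀T ih =>
    obtain ⟨y, hyS, hyi, h1, h2⟩ := ih
    by_cases hj₀i : j₀ = i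
    · refine ⟨y, hyS, hyi, h1, ?_⟩
      intro j hj hji
      rcases Finset.mem_insert.mp hj with h | h
      · exact absurd (h.trans hj₀i) hji
      · exact h2 j h hji
    · obtain ⟨y', hy'S, hy'i, hy'ge, hy'j₀⟩ :=
        raise_lemma hS hβ₂ hj₀i hyS hyi h1 (w j₀ - y j₀).toNat
      refine ⟨y', hy'S, hy'i, fun j hj => le_trans (h1 j hj) (hy'ge j hj), ?_⟩
      intro j hj hji
      rcases Finset.mem_insert.mp hj with h | h
      · subst h
        have := Int.self_le_toNat (w j - y j)
        linarith
      · exact le_trans (h2 j h hji) (hy'ge j hji)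

lemma deltaGamma_empty {s : ℕ} {S : Set (Vec s)} (hS : GoodLocal S) {β : Vec s}
    (hβ₁ : 0 ≤ β) (hβ₂ : ∀ x : Vec s, 0 ≤ x → β + x ∈ S)
    (hβ₃ : ∀ c : Vec s, 0 ≤ c → (∀ x : Vec s, 0 ≤ x → c + x ∈ S) → β ≤ c) :
    Delta S (β - 1) = ∅ := by
  rw [Set.eq_empty_iff_forall_notMem]
  rintro z ⟨hzS, i, hzi, hzgt⟩
  have hz0 := hS.1 z hzS
  have hzi' : z i = β i - 1 := by simpa using hzi
  have hzle : ∀ j, j ≠ i → β j ≤ z j := by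
    intro j hj
    have := hzgt j hj
    simp only [Pi.sub_apply, Pi.one_apply] at this
    linarith
  have key : ∀ x : Vec s, 0 ≤ x → (β - (Pi.single i 1 : Vec s)) + x ∈ S := by
    intro x hx
    by_cases hxi : 1 ≤ x i
    · have heq : (β - (Pi.single i 1 : Vec s)) + x = β + (x - (Pi.single i 1 : Vec s)) := by ring
      rw [heq]
      apply hβ₂
      intro k
      simp only [Pi.sub_apply, Pi.zero_apply]
      by_cases hk : k = i
      · subst hk; rw [Pi.single_eq_same]; linarith
      · rw [Pi.single_eq_of_ne hk]; have := hx k; simpa using this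
    · have hxi0 : x i = 0 := by
        have := hx i
        simp only [Pi.zero_apply] at this
        omega
      obtain ⟨y, hyS, hyi, hy⟩ := reach_lemma hS hβ₂ hzS hzi' hzle (β - (Pi.single i 1 : Vec s) + x)
      have hmin := hS.2.2.2.1 y hyS (β + x) (hβ₂ x hx)
      have heq : y ⊓ (β + x) = β - (Pi.single i 1 : Vec s) + x := by
        funext k
        simp only [Pi.inf_apply, Pi.add_apply, Pi.sub_apply]
        by_cases hk : k = i
        · subst hk
          rw [Pi.single_eq_same, hyi, hxi0]
          omega
        · rw [Pi.single_eq_of_ne hk]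
          have := (hy k hk).2
          simp only [Pi.add_apply, Pi.sub_apply, Pi.single_eq_of_ne hk] at this
          omega
      rw [heq] at hmin
      exact hmin
  have hc0 : (0 : Vec s) ≤ β - (Pi.single i 1 : Vec s) := by
    intro k
    simp only [Pi.zero_apply, Pi.sub_apply]
    by_cases hk : k = i
    · subst hk; rw [Pi.single_eq_same]
      have h1 := hz0 k; simp only [Pi.zero_apply] at h1
      linarith [hzi']
    · rw [Pi.single_eq_of_ne hk]
      have := hβ₁ k; simp only [Pi.zero_apply] at this; linarith
  have hle := hβ₃ _ hc0 key
  have := hle i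
  simp only [Pi.sub_apply, Pi.single_eq_same] at this
  linarith

lemma delta_shift {s : ℕ} {S : Set (Vec s)} (hS : GoodLocal S) {β a : Vec s}
    (ha : a ∈ S) (h : Delta S (β - 1) = ∅) : Delta S (β - 1 - a) = ∅ := by
  rw [Set.eq_empty_iff_forall_notMem] at h ⊢
  rintro d ⟨hdS, i, hdi, hdgt⟩
  apply h (d + a)
  refine ⟨hS.2.2.1 d hdS a ha, i, ?_, ?_⟩
  · simp only [Pi.add_apply, Pi.sub_apply, Pi.one_apply] at hdi ⊢
    linarith
  · intro j hj
    have := hdgt j hj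
    simp only [Pi.add_apply, Pi.sub_apply, Pi.one_apply] at this ⊢
    linarith

lemma delta_alpha_b {s : ℕ} {S : Set (Vec s)} (hS : GoodLocal S) {α b : Vec s}
    (hα₃ : ∀ a ∈ S, a ≠ 0 → α ≤ a) (hb0 : 0 ≤ b) (hbα : b ≤ α)
    (hsum : 2 ≤ ∑ t, (α t - b t)) : Delta S (α - b - 1) = ∅ := by
  rw [Set.eq_empty_iff_forall_notMem]
  rintro d ⟨hdS, i, hdi, hdgt⟩
  by_cases hd : d = 0
  · subst hd
    simp only [Pi.zero_apply, Pi.sub_apply, Pi.one_apply] at hdi hdgt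
    have hi : α i - b i = 1 := by linarith
    have hj : ∀ j ∈ Finset.univ, j ≠ i → α j - b j = 0 := by
      intro j _ hjne
      have h1 := hdgt j hjne
      have h2 := hbα j
      linarith
    have : ∑ t, (α t - b t) = 1 := by
      rw [Finset.sum_eq_single i (fun j h1 h2 => hj j h1 h2) (by simp)]
      exact hi
    linarith
  · have h1 := hα₃ d hdS hd i
    have h2 := hb0 i
    simp only [Pi.sub_apply, Pi.one_apply] at hdi
    simp only [Pi.zero_apply] at h2
    linarith

/-- `A₁ + jα ⊆ K° + K°` for every `1 ≤ j ≤ m`. -/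
theorem A1_plus_j_alpha_subset
    (s : ℕ) (hs : 1 ≤ s) (S : Set (Vec s)) (hS : GoodLocal S)
    (hSne : S ≠ {a : Vec s | 0 ≤ a}) (α β : Vec s)
    (hα₁ : α ∈ S) (hα₂ : α ≠ 0) (hα₃ : ∀ a ∈ S, a ≠ 0 → α ≤ a)
    (hβ₁ : 0 ≤ β) (hβ₂ : ∀ x : Vec s, 0 ≤ x → β + x ∈ S)
    (hβ₃ : ∀ c : Vec s, 0 ≤ c → (∀ x : Vec s, 0 ≤ x → c + x ∈ S) → β ≤ c)
    (m : ℤ) (hm₁ : (m + 1) • α ≤ β) (hm₂ : ∀ m' : ℤ, (m' + 1) • α ≤ β → m' ≤ m)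
    (hm1 : 1 ≤ m) :
    ∀ j : ℤ, 1 ≤ j → j ≤ m →
      ∀ b : Vec s, 0 ≤ b → b < α → 2 ≤ ∑ t, (α t - b t) →
        β + (j - 1) • α + b ∈ Kcirc S β + Kcirc S β := by
  intro j hj1 hjm b hb0 hbα hsum
  have hα0 : 0 ≤ α := hS.1 α hα₁
  have hαpos : ∀ k, 1 ≤ α k := by
    intro k
    have h0 := hα0 k
    simp only [Pi.zero_apply] at h0
    rcases lt_or_ge 0 (α k) with h | h
    · omega
    · exact absurd (hS.2.2.2.2.2.2 α hα₁ ⟨k, le_antisymm h h0⟩) hα₂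
  -- j • α ∈ S
  have hn : ∀ n : ℕ, ((n : ℤ) • α : Vec s) ∈ S := by
    intro n
    induction n with
    | zero => simpa using hS.2.1
    | succ n ih =>
      have h := hS.2.2.1 _ ih α hα₁
      have heq : (((n + 1 : ℕ) : ℤ) • α : Vec s) = (n : ℤ) • α + α := by
        push_cast
        rw [add_smul, one_smul]
      rw [heq]
      exact h
  have hjα : (j • α : Vec s) ∈ S := by
    have hj' : j = ((j.toNat : ℤ)) := (Int.toNat_of_nonneg (by linarith)).symm
    rw [hj']
    exact hn j.toNat
  -- j • α < β (strict in every coordinate)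
  have hjαβ : ∀ k, j * α k + α k ≤ β k := by
    intro k
    have h1 : (m + 1) * α k ≤ β k := by
      have := hm₁ k
      simpa [Pi.smul_apply, smul_eq_mul] using this
    have h2 : (j + 1) * α k ≤ (m + 1) * α k := by
      apply mul_le_mul_of_nonneg_right (by linarith)
      have := hα0 k; simpa using this
    nlinarith [hαpos k]
  have hjαltβ : (j • α : Vec s) < β := by
    rw [Pi.lt_def]
    constructor
    · intro k
      have := hjαβ k
      have := hαpos k
      simp only [Pi.smul_apply, smul_eq_mul]
      linarith
    · refine ⟨⟨0, hs⟩, ?_⟩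
      have := hjαβ ⟨0, hs⟩
      have := hαpos ⟨0, hs⟩
      simp only [Pi.smul_apply, smul_eq_mul]
      linarith
  -- x := j • α ∈ Kcirc
  have hA : Delta S (β - 1) = ∅ := deltaGamma_empty hS hβ₁ hβ₂ hβ₃
  have hx : (j • α : Vec s) ∈ Kcirc S β := by
    refine ⟨?_, hjαltβ⟩
    exact delta_shift hS hjα hA
  -- y := β - α + b ∈ Kcirc
  have hbleα : b ≤ α := le_of_lt hbα
  have hy : (β - α + b : Vec s) ∈ Kcirc S β := by
    constructor
    · show Delta S (β - 1 - (β - α + b)) = ∅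
      have heq : β - 1 - (β - α + b) = α - b - 1 := by ring
      rw [heq]
      exact delta_alpha_b hS hα₃ hb0 hbleα hsum
    · rw [Pi.lt_def]
      constructor
      · intro k
        have h1 := hbleα k
        simp only [Pi.add_apply, Pi.sub_apply]
        linarith
      · obtain ⟨_, k, hk⟩ := Pi.lt_def.mp hbα
        refine ⟨k, ?_⟩
        simp only [Pi.add_apply, Pi.sub_apply]
        linarith
  have hsumeq : β + (j - 1) • α + b = j • α + (β - α + b) := by
    rw [sub_smul, one_smul]
    ring
  rw [hsumeq]
  exact Set.add_mem_add hx hy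
end
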